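/- arXiv:2405.05289 — 9 statements merged into one kernel-verified Lean document; each statement's English description precedes it below -/
import Mathlib

section
/- Let A and B be bounded self-adjoint operators on a complex Hilbert space with A, B ≤ 0 (negative) and both invertible, and let λ ≥ 0 be a real scalar. Then the inequality (λ·I − A − B)⁻¹ ≤ (λ·I − A)⁻¹ + (λ·I − B)⁻¹ holds if and only if A(λ·I − B)⁻¹A + B(λ·I − A)⁻¹B + λ·I − 2(A + B) ≥ 0. -/
/-!
Write `P = λ - A`, `Q = λ - B` and `C = λ - A - B`. Since `C = P - B = Q - A`, expanding
`C P⁻¹ C` and `C Q⁻¹ C` gives the identity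
`C (P⁻¹ + Q⁻¹ - C⁻¹) C = A Q⁻¹ A + B P⁻¹ B + λ - 2 (A + B)`.
The operators `-A`, `-B` are positive and invertible, hence so are `P`, `Q` and `C`, and
congruence by the invertible self-adjoint `C` preserves and reflects positivity.
-/

theorem Ring.sub_mul_inverse_mul_sub {R : Type*} [Ring R] {u : R} (hu : IsUnit u) (b : R) :
    (u - b) * Ring.inverse u * (u - b) = u - 2 • b + b * Ring.inverse u * b := by
  calc (u - b) * Ring.inverse u * (u - b)
      = u * Ring.inverse u * u - u * Ring.inverse u * b - b * (Ring.inverse u * u)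
          + b * Ring.inverse u * b := by noncomm_ring
    _ = u - 2 • b + b * Ring.inverse u * b := by
      rw [Ring.mul_inverse_cancel u hu, Ring.inverse_mul_cancel u hu]; noncomm_ring

theorem Ring.resolvent_add_resolvent_sub_resolvent_conj {R : Type*} [Ring R] {l a b : R}
    (ha : IsUnit (l - a)) (hb : IsUnit (l - b)) (hab : IsUnit (l - a - b)) :
    (l - a - b) * (Ring.inverse (l - a) + Ring.inverse (l - b) - Ring.inverse (l - a - b)) *
        (l - a - b) =
      a * Ring.inverse (l - b) * a + b * Ring.inverse (l - a) * b + l - 2 • (a + b) := by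
  have hba : l - a - b = l - b - a := sub_right_comm l a b
  calc _ = (l - a - b) * Ring.inverse (l - a) * (l - a - b)
          + (l - b - a) * Ring.inverse (l - b) * (l - b - a)
          - (l - a - b) * Ring.inverse (l - a - b) * (l - a - b) := by
        rw [← hba]; noncomm_ring
    _ = _ := by
      rw [Ring.sub_mul_inverse_mul_sub ha, Ring.sub_mul_inverse_mul_sub hb,
        Ring.mul_inverse_cancel _ hab, one_mul]
      abel

theorem IsStrictlyPositive.smul_one_sub {A : Type*} [CStarAlgebra A] [PartialOrder A]
    [StarOrderedRing A] {a : A} (ha : IsStrictlyPositive (-a)) {r : ℝ} (hr : 0 ≤ r) :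
    IsStrictlyPositive (r • (1 : A) - a) := by
  simpa only [sub_eq_add_neg] using ha.nonneg_add (smul_nonneg hr zero_le_one)

theorem soc_subadditivity_resolvent_iff_general
    {H : Type*} [NormedAddCommGroup H] [InnerProductSpace ℂ H] [CompleteSpace H]
    (A B : H →L[ℂ] H)
    (hAneg : A ≤ 0) (hBneg : B ≤ 0) (hAinv : IsUnit A) (hBinv : IsUnit B)
    (lam : ℝ) (hlam : 0 ≤ lam) :
    Ring.inverse (lam • (1 : H →L[ℂ] H) - A - B) ≤
      Ring.inverse (lam • (1 : H →L[ℂ] H) - A) + Ring.inverse (lam • (1 : H →L[ℂ] H) - B) ↔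
    0 ≤ A * Ring.inverse (lam • (1 : H →L[ℂ] H) - B) * A +
        B * Ring.inverse (lam • (1 : H →L[ℂ] H) - A) * B +
        lam • (1 : H →L[ℂ] H) - 2 • (A + B) := by
  have hA : IsStrictlyPositive (-A) := hAinv.neg.isStrictlyPositive (neg_nonneg.2 hAneg)
  have hB : IsStrictlyPositive (-B) := hBinv.neg.isStrictlyPositive (neg_nonneg.2 hBneg)
  have hP := hA.smul_one_sub hlam
  have hQ := hB.smul_one_sub hlam
  have hC : IsStrictlyPositive (lam • (1 : H →L[ℂ] H) - A - B) := by
    rw [sub_sub]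
    exact IsStrictlyPositive.smul_one_sub (by simpa only [neg_add] using hA.add_nonneg hB.nonneg)
      hlam
  rw [← sub_nonneg, ← hC.isUnit.star_left_conjugate_nonneg_iff, hC.isSelfAdjoint.star_eq,
    Ring.resolvent_add_resolvent_sub_resolvent_conj hP.isUnit hQ.isUnit hC.isUnit]

theorem soc_subadditivity_resolvent_iff
    {H : Type*} [NormedAddCommGroup H] [InnerProductSpace ℂ H] [CompleteSpace H]
    (A B : H →L[ℂ] H) (hA : IsSelfAdjoint A) (hB : IsSelfAdjoint B)
    (hAneg : A ≤ 0) (hBneg : B ≤ 0) (hAinv : IsUnit A) (hBinv : IsUnit B)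
    (lam : ℝ) (hlam : 0 ≤ lam) :
    Ring.inverse (lam • (1 : H →L[ℂ] H) - A - B) ≤
      Ring.inverse (lam • (1 : H →L[ℂ] H) - A) + Ring.inverse (lam • (1 : H →L[ℂ] H) - B) ↔
    0 ≤ A * Ring.inverse (lam • (1 : H →L[ℂ] H) - B) * A +
        B * Ring.inverse (lam • (1 : H →L[ℂ] H) - A) * B +
        lam • (1 : H →L[ℂ] H) - 2 • (A + B) :=
  soc_subadditivity_resolvent_iff_general A B hAneg hBneg hAinv hBinv lam hlam
end

section
/- Let A, B be positive invertible bounded operators on a complex Hilbert space and α ∈ (0,1). Then (1−α)A + αB − ((1−α)A⁻¹ + αB⁻¹)⁻¹ = α(1−α)(A−B)(αA + (1−α)B)⁻¹(A−B). -/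
/-!
Put `M = α • A + (1 - α) • B`. Since `(1 - α) • A⁻¹ + α • B⁻¹ = A⁻¹ * M * B⁻¹`, the harmonic
mean is `B * M⁻¹ * A`. With `D = A - B` one has `A = M + (1 - α) • D` and `B = M - α • D`, and
expanding `B * M⁻¹ * A` in these terms gives the identity; it only uses `M⁻¹ * M = M * M⁻¹ = 1`.
`M` is invertible because it dominates the strictly positive operator `α • A`.
-/

section WeightedMeans

variable {𝕜 R : Type*} [CommRing 𝕜] [Ring R] [Module 𝕜 R] [IsScalarTower 𝕜 R R]
  [SMulCommClass 𝕜 R R]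

theorem Ring.inverse_smul_inverse_add_smul_inverse {a b : R} (ha : IsUnit a) (hb : IsUnit b)
    {s t : 𝕜} (hm : IsUnit (s • a + t • b)) :
    Ring.inverse (t • Ring.inverse a + s • Ring.inverse b) =
      b * Ring.inverse (s • a + t • b) * a := by
  have hfactor : t • Ring.inverse a + s • Ring.inverse b =
      Ring.inverse a * (s • a + t • b) * Ring.inverse b := by
    simp only [mul_add, add_mul, mul_smul_comm, smul_mul_assoc, Ring.inverse_mul_cancel a ha,
      mul_assoc, Ring.mul_inverse_cancel b hb, mul_one, one_mul]
    exact add_comm _ _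
  rw [hfactor]
  lift a to Rˣ using ha
  lift b to Rˣ using hb
  lift s • (a : R) + t • (b : R) to Rˣ using hm with m
  simp only [Ring.inverse_unit, ← Units.val_mul]
  simp [mul_assoc]

theorem smul_add_smul_sub_mul_inverse_mul {a b : R} {s t : 𝕜} (hst : s + t = 1)
    (hm : IsUnit (s • a + t • b)) :
    t • a + s • b - b * Ring.inverse (s • a + t • b) * a =
      (s * t) • ((a - b) * Ring.inverse (s • a + t • b) * (a - b)) := by
  set m := s • a + t • b
  set d := a - b
  have ha : a = m + t • d := by linear_combination (norm := module) -(hst • a)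
  have hb : b = m - s • d := by linear_combination (norm := module) -(hst • b)
  have hmc : m * Ring.inverse m = 1 := Ring.mul_inverse_cancel m hm
  have hcm : Ring.inverse m * m = 1 := Ring.inverse_mul_cancel m hm
  clear_value m d
  subst ha hb
  simp only [mul_add, sub_mul, smul_mul_assoc, mul_smul_comm, hmc, hcm, mul_assoc, mul_one,
    one_mul]
  linear_combination (norm := module) hst • (m + (t - s) • d)

end WeightedMeans

theorem weighted_arithmetic_harmonic_difference_general
    {H : Type*} [NormedAddCommGroup H] [InnerProductSpace ℂ H] [CompleteSpace H]
    (A B : H →L[ℂ] H)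
    (hApos : 0 ≤ A) (hBpos : 0 ≤ B) (hAinv : IsUnit A) (hBinv : IsUnit B)
    (α : ℝ) (hα0 : 0 < α) (hα1 : α < 1) :
    (1 - α) • A + α • B -
      Ring.inverse ((1 - α) • Ring.inverse A + α • Ring.inverse B) =
    (α * (1 - α)) • ((A - B) * Ring.inverse (α • A + (1 - α) • B) * (A - B)) := by
  have hM : IsUnit (α • A + (1 - α) • B) :=
    (((hAinv.isStrictlyPositive hApos).smul hα0).add_nonneg
      (smul_nonneg (sub_nonneg.2 hα1.le) hBpos)).isUnit
  rw [Ring.inverse_smul_inverse_add_smul_inverse hAinv hBinv hM]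
  exact smul_add_smul_sub_mul_inverse_mul (add_sub_cancel α 1) hM

theorem weighted_arithmetic_harmonic_difference
    {H : Type*} [NormedAddCommGroup H] [InnerProductSpace ℂ H] [CompleteSpace H]
    (A B : H →L[ℂ] H) (hA : IsSelfAdjoint A) (hB : IsSelfAdjoint B)
    (hApos : 0 ≤ A) (hBpos : 0 ≤ B) (hAinv : IsUnit A) (hBinv : IsUnit B)
    (α : ℝ) (hα0 : 0 < α) (hα1 : α < 1) :
    (1 - α) • A + α • B -
      Ring.inverse ((1 - α) • Ring.inverse A + α • Ring.inverse B) =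
    (α * (1 - α)) • ((A - B) * Ring.inverse (α • A + (1 - α) • B) * (A - B)) :=
  weighted_arithmetic_harmonic_difference_general A B hApos hBpos hAinv hBinv α hα0 hα1
end

section
/- Let A, B, C be positive invertible bounded operators on a complex Hilbert space and α ∈ (0,1). Then C ≤ ((1−α)A⁻¹ + αB⁻¹)⁻¹ if and only if the 2×2 operator block matrix [[αA − α(1−α)C, α(1−α)C], [α(1−α)C, (1−α)B − α(1−α)C]] is a positive operator on H ⊕ H. -/
open RCLike
open scoped InnerProductSpace Ring

/-!
For fixed `z = x - y`, the form `α ⟪A x, x⟫ + (1 - α) ⟪B y, y⟫` is minimised, by completing the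
square in `x` and in `y`, at `x = (1 - α) A⁻¹ w`, `y = -α B⁻¹ w` with `w = M z`, where
`M = ((1 - α) A⁻¹ + α B⁻¹)⁻¹`; its minimum is `α (1 - α) ⟪M z, z⟫`. So the block condition says
exactly that `⟪C z, z⟫ ≤ ⟪M z, z⟫` for all `z`, which is `C ≤ M`.
-/

theorem LinearMap.IsSymmetric.re_inner_map_self_eq {𝕜 E : Type*} [RCLike 𝕜]
    [NormedAddCommGroup E] [InnerProductSpace 𝕜 E] {T : E →ₗ[𝕜] E} (hT : T.IsSymmetric)
    (x : E) {u v : E} (huv : T u = v) :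
    re ⟪T x, x⟫_𝕜 = re ⟪T (x - u), x - u⟫_𝕜 + 2 * re ⟪v, x⟫_𝕜 - re ⟪v, u⟫_𝕜 := by
  have hsymm : re ⟪T x, u⟫_𝕜 = re ⟪T u, x⟫_𝕜 := by rw [hT x u, inner_re_symm]
  simp only [map_sub, inner_sub_left, inner_sub_right, hsymm, huv]
  ring

theorem ContinuousLinearMap.le_iff_re_inner_le {𝕜 E : Type*} [RCLike 𝕜]
    [NormedAddCommGroup E] [InnerProductSpace 𝕜 E] [CompleteSpace E] {S T : E →L[𝕜] E}
    (hS : IsSelfAdjoint S) (hT : IsSelfAdjoint T) :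
    S ≤ T ↔ ∀ x, re ⟪S x, x⟫_𝕜 ≤ re ⟪T x, x⟫_𝕜 := by
  simp only [le_def, isPositive_def', hT.sub hS, true_and, reApplyInnerSelf, sub_apply,
    inner_sub_left, map_sub, sub_nonneg]

section ComplexHilbert

variable {H : Type*} [NormedAddCommGroup H] [InnerProductSpace ℂ H]

theorem re_inner_real_smul_left (r : ℝ) (x y : H) : (⟪r • x, y⟫_ℂ).re = r * (⟪x, y⟫_ℂ).re := by
  simp

theorem re_inner_real_smul_right (r : ℝ) (x y : H) : (⟪x, r • y⟫_ℂ).re = r * (⟪x, y⟫_ℂ).re := by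
  simp

theorem ContinuousLinearMap.apply_ringInverse_apply {A : H →L[ℂ] H} (hA : IsUnit A) (v : H) :
    A (A⁻¹ʳ v) = v := by
  rw [← mul_apply_eq_comp, Ring.mul_inverse_cancel A hA, one_apply_eq_self]

theorem weighted_re_inner_self_eq {A B : H →L[ℂ] H} (hA : A.IsSymmetric) (hB : B.IsSymmetric)
    (hAu : IsUnit A) (hBu : IsUnit B) (α : ℝ) {x y w : H}
    (hw : ((1 - α) • A⁻¹ʳ + α • B⁻¹ʳ) w = x - y) :
    α * (⟪A x, x⟫_ℂ).re + (1 - α) * (⟪B y, y⟫_ℂ).re =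
      α * (1 - α) * (⟪w, x - y⟫_ℂ).re
        + α * (⟪A (x - (1 - α) • A⁻¹ʳ w), x - (1 - α) • A⁻¹ʳ w⟫_ℂ).re
        + (1 - α) * (⟪B (y + α • B⁻¹ʳ w), y + α • B⁻¹ʳ w⟫_ℂ).re := by
  have hx := hA.re_inner_map_self_eq x (u := (1 - α) • A⁻¹ʳ w) (v := (1 - α) • w) <| by
    rw [ContinuousLinearMap.coe_coe, A.map_smul_of_tower,
      ContinuousLinearMap.apply_ringInverse_apply hAu]
  have hy := hB.re_inner_map_self_eq y (u := -(α • B⁻¹ʳ w)) (v := -(α • w)) <| by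
    rw [ContinuousLinearMap.coe_coe, map_neg, B.map_smul_of_tower,
      ContinuousLinearMap.apply_ringInverse_apply hBu]
  have hPw : (⟪w, x - y⟫_ℂ).re = (1 - α) * (⟪w, A⁻¹ʳ w⟫_ℂ).re + α * (⟪w, B⁻¹ʳ w⟫_ℂ).re := by
    rw [← hw]; simp
  have hxy : (⟪w, x - y⟫_ℂ).re = (⟪w, x⟫_ℂ).re - (⟪w, y⟫_ℂ).re := by
    rw [inner_sub_right, Complex.sub_re]
  simp only [ContinuousLinearMap.coe_coe, sub_neg_eq_add, inner_neg_left, inner_neg_right,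
    re_inner_real_smul_left, re_inner_real_smul_right, Complex.neg_re, re_to_complex] at hx hy
  rw [hx, hy]
  linear_combination α * (1 - α) * hPw - 2 * α * (1 - α) * hxy

theorem weighted_re_inner_self_at_minimizer {A B : H →L[ℂ] H} (hA : A.IsSymmetric)
    (hB : B.IsSymmetric) (hAu : IsUnit A) (hBu : IsUnit B) (α : ℝ) (w : H) :
    α * (⟪A ((1 - α) • A⁻¹ʳ w), (1 - α) • A⁻¹ʳ w⟫_ℂ).re
        + (1 - α) * (⟪B (-(α • B⁻¹ʳ w)), -(α • B⁻¹ʳ w)⟫_ℂ).re =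
      α * (1 - α) * (⟪w, ((1 - α) • A⁻¹ʳ + α • B⁻¹ʳ) w⟫_ℂ).re := by
  have hw : ((1 - α) • A⁻¹ʳ + α • B⁻¹ʳ) w = (1 - α) • A⁻¹ʳ w - -(α • B⁻¹ʳ w) := by
    rw [sub_neg_eq_add]; rfl
  rw [weighted_re_inner_self_eq hA hB hAu hBu α hw, ← hw]
  simp

theorem mul_re_inner_le_weighted_re_inner_self {A B : H →L[ℂ] H} (hA : A.IsPositive)
    (hB : B.IsPositive) (hAu : IsUnit A) (hBu : IsUnit B) {α : ℝ} (hα0 : 0 ≤ α) (hα1 : α ≤ 1)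
    {x y w : H} (hw : ((1 - α) • A⁻¹ʳ + α • B⁻¹ʳ) w = x - y) :
    α * (1 - α) * (⟪w, x - y⟫_ℂ).re ≤ α * (⟪A x, x⟫_ℂ).re + (1 - α) * (⟪B y, y⟫_ℂ).re := by
  rw [weighted_re_inner_self_eq hA.isSymmetric hB.isSymmetric hAu hBu α hw]
  have hAx := hA.re_inner_nonneg_left (x - (1 - α) • A⁻¹ʳ w)
  have hBy := hB.re_inner_nonneg_left (y + α • B⁻¹ʳ w)
  simp only [re_to_complex] at hAx hBy
  linarith [mul_nonneg hα0 hAx, mul_nonneg (sub_nonneg.2 hα1) hBy]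

end ComplexHilbert

theorem le_weighted_harmonic_iff_block_positive_general
    {H : Type*} [NormedAddCommGroup H] [InnerProductSpace ℂ H] [CompleteSpace H]
    (A B C : H →L[ℂ] H) (hC : IsSelfAdjoint C)
    (hApos : 0 ≤ A) (hBpos : 0 ≤ B)
    (hAinv : IsUnit A) (hBinv : IsUnit B)
    (α : ℝ) (hα0 : 0 < α) (hα1 : α < 1) :
    C ≤ Ring.inverse ((1 - α) • Ring.inverse A + α • Ring.inverse B) ↔
    ∀ x y : H, α * (1 - α) * (inner ℂ (C (x - y)) (x - y) : ℂ).re ≤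
      α * (inner ℂ (A x) x : ℂ).re + (1 - α) * (inner ℂ (B y) y : ℂ).re := by
  set P := (1 - α) • A⁻¹ʳ + α • B⁻¹ʳ
  have hAp := (ContinuousLinearMap.nonneg_iff_isPositive A).1 hApos
  have hBp := (ContinuousLinearMap.nonneg_iff_isPositive B).1 hBpos
  have hAsp := hAinv.isStrictlyPositive hApos
  have hBsp := hBinv.isStrictlyPositive hBpos
  have hP : IsStrictlyPositive P :=
    (hAsp.ringInverse.smul (sub_pos.2 hα1)).add_nonneg
      (smul_nonneg hα0.le hBsp.ringInverse.nonneg)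
  have hPP := ContinuousLinearMap.apply_ringInverse_apply hP.isUnit
  have hαα : 0 < α * (1 - α) := mul_pos hα0 (sub_pos.2 hα1)
  rw [ContinuousLinearMap.le_iff_re_inner_le hC hP.ringInverse.isSelfAdjoint]
  constructor
  · intro hCP x y
    exact (mul_le_mul_of_nonneg_left (hCP (x - y)) hαα.le).trans
      (mul_re_inner_le_weighted_re_inner_self hAp hBp hAinv hBinv
        hα0.le hα1.le (hPP (x - y)))
  · intro h z
    set w := P⁻¹ʳ z
    have hz : (1 - α) • A⁻¹ʳ w - -(α • B⁻¹ʳ w) = z := by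
      rw [sub_neg_eq_add]; exact hPP z
    have hmin := weighted_re_inner_self_at_minimizer hAp.isSymmetric hBp.isSymmetric
      hAinv hBinv α w
    rw [hPP z] at hmin
    have hblock := h ((1 - α) • A⁻¹ʳ w) (-(α • B⁻¹ʳ w))
    rw [hz, hmin] at hblock
    exact le_of_mul_le_mul_left hblock hαα

theorem le_weighted_harmonic_iff_block_positive
    {H : Type*} [NormedAddCommGroup H] [InnerProductSpace ℂ H] [CompleteSpace H]
    (A B C : H →L[ℂ] H) (hA : IsSelfAdjoint A) (hB : IsSelfAdjoint B) (hC : IsSelfAdjoint C)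
    (hApos : 0 ≤ A) (hBpos : 0 ≤ B) (hCpos : 0 ≤ C)
    (hAinv : IsUnit A) (hBinv : IsUnit B) (hCinv : IsUnit C)
    (α : ℝ) (hα0 : 0 < α) (hα1 : α < 1) :
    C ≤ Ring.inverse ((1 - α) • Ring.inverse A + α • Ring.inverse B) ↔
    ∀ x y : H, α * (1 - α) * (inner ℂ (C (x - y)) (x - y) : ℂ).re ≤
      α * (inner ℂ (A x) x : ℂ).re + (1 - α) * (inner ℂ (B y) y : ℂ).re :=
  le_weighted_harmonic_iff_block_positive_general A B C hC hApos hBpos hAinv hBinv α hα0 hα1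
end

section
/- Let A, B be positive invertible bounded operators on a complex Hilbert space. For all x, y, z ∈ H with z = x + y, one has ⟨(A⁻¹+B⁻¹)⁻¹ z, z⟩ ≤ ⟨Ax, x⟩ + ⟨By, y⟩. -/
/-!
Positivity of `A` applied to `x - A⁻¹ u` gives `2 Re⟪u, x⟫ ≤ ⟪A x, x⟫ + ⟪u, A⁻¹ u⟫` for all
`x, u`. Take `u = (A⁻¹ + B⁻¹)⁻¹ z`, so that `z = A⁻¹ u + B⁻¹ u`, and add this bound to the
one for `B` and `y`: the terms `⟪u, A⁻¹ u⟫ + ⟪u, B⁻¹ u⟫` sum to `Re⟪u, z⟫`, and what remains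
is `Re⟪u, z⟫ ≤ ⟪A x, x⟫ + ⟪B y, y⟫`.
-/

open RCLike Ring ContinuousLinearMap
open scoped InnerProductSpace

section

variable {𝕜 E : Type*} [RCLike 𝕜] [NormedAddCommGroup E] [InnerProductSpace 𝕜 E]

theorem LinearMap.IsPositive.two_mul_re_inner_le {T : E →ₗ[𝕜] E} (hT : T.IsPositive)
    (x v : E) : 2 * re ⟪T v, x⟫_𝕜 ≤ re ⟪T x, x⟫_𝕜 + re ⟪T v, v⟫_𝕜 := by
  have hsq := hT.re_inner_nonneg_left (x - v)
  have hsymm : re ⟪T x, v⟫_𝕜 = re ⟪T v, x⟫_𝕜 := by rw [hT.isSymmetric, inner_re_symm]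
  simp only [map_sub, inner_sub_left, inner_sub_right] at hsq
  linarith

theorem ContinuousLinearMap.IsPositive.two_mul_re_inner_le_re_inner_ringInverse
    {A : E →L[𝕜] E} (hA : A.IsPositive) (hAinv : IsUnit A) (x u : E) :
    2 * re ⟪u, x⟫_𝕜 ≤ re ⟪A x, x⟫_𝕜 + re ⟪u, A⁻¹ʳ u⟫_𝕜 := by
  have hu : A (A⁻¹ʳ u) = u := by
    rw [← mul_apply_eq_comp, mul_inverse_cancel A hAinv, one_apply_eq_self]
  simpa only [coe_coe, hu] using hA.toLinearMap.two_mul_re_inner_le x (A⁻¹ʳ u)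

end

theorem parallel_sum_le_general
    {H : Type*} [NormedAddCommGroup H] [InnerProductSpace ℂ H] [CompleteSpace H]
    (A B : H →L[ℂ] H)
    (hApos : 0 ≤ A) (hBpos : 0 ≤ B) (hAinv : IsUnit A) (hBinv : IsUnit B) :
    ∀ x y z : H, z = x + y →
      (inner ℂ (Ring.inverse (Ring.inverse A + Ring.inverse B) z) z : ℂ).re ≤
        (inner ℂ (A x) x : ℂ).re + (inner ℂ (B y) y : ℂ).re := by
  rintro x y z rfl
  have hC : IsUnit (A⁻¹ʳ + B⁻¹ʳ) :=
    ((hAinv.isStrictlyPositive hApos).ringInverse.add_nonneg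
      (hBinv.isStrictlyPositive hBpos).ringInverse.nonneg).isUnit
  set u := (A⁻¹ʳ + B⁻¹ʳ)⁻¹ʳ (x + y)
  have hu : x + y = A⁻¹ʳ u + B⁻¹ʳ u := by
    rw [← add_apply, ← mul_apply_eq_comp, mul_inverse_cancel _ hC, one_apply_eq_self]
  have hx := ((nonneg_iff_isPositive A).mp hApos).two_mul_re_inner_le_re_inner_ringInverse
    hAinv x u
  have hy := ((nonneg_iff_isPositive B).mp hBpos).two_mul_re_inner_le_re_inner_ringInverse
    hBinv y u
  have hsplit : re ⟪u, x + y⟫_ℂ = re ⟪u, x⟫_ℂ + re ⟪u, y⟫_ℂ := by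
    rw [inner_add_right, map_add]
  have hsum : re ⟪u, x + y⟫_ℂ = re ⟪u, A⁻¹ʳ u⟫_ℂ + re ⟪u, B⁻¹ʳ u⟫_ℂ := by
    conv_lhs => rw [hu]
    rw [inner_add_right, map_add]
  change re ⟪u, x + y⟫_ℂ ≤ re ⟪A x, x⟫_ℂ + re ⟪B y, y⟫_ℂ
  linarith

theorem parallel_sum_le
    {H : Type*} [NormedAddCommGroup H] [InnerProductSpace ℂ H] [CompleteSpace H]
    (A B : H →L[ℂ] H) (hA : IsSelfAdjoint A) (hB : IsSelfAdjoint B)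
    (hApos : 0 ≤ A) (hBpos : 0 ≤ B) (hAinv : IsUnit A) (hBinv : IsUnit B) :
    ∀ x y z : H, z = x + y →
      (inner ℂ (Ring.inverse (Ring.inverse A + Ring.inverse B) z) z : ℂ).re ≤
        (inner ℂ (A x) x : ℂ).re + (inner ℂ (B y) y : ℂ).re :=
  parallel_sum_le_general A B hApos hBpos hAinv hBinv
end

section
/- Let A and B be positive invertible bounded operators on a complex Hilbert space such that A − B ≥ m·I for some scalar m > 0. Then B⁻¹ − A⁻¹ ≥ m(‖A‖ − m)⁻¹‖A‖⁻¹ · I. -/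
/-!
Since `B ≤ A - m`, antitonicity of the inverse on strictly positive elements gives
`(A - m)⁻¹ ≤ B⁻¹`. The spectrum of `A` lies in `(m, ‖A‖]`, where
`(t - m)⁻¹ - t⁻¹ = m / ((t - m) t)` is bounded below by its value at `‖A‖`; the continuous
functional calculus turns this into `(A - m)⁻¹ - A⁻¹ ≥ m / ((‖A‖ - m) ‖A‖)`.
-/

lemma mul_inv_mul_inv_le_inv_sub_inv {m x r : ℝ} (hm : 0 ≤ m) (hmx : m < x) (hxr : x ≤ r) :
    m * (r - m)⁻¹ * r⁻¹ ≤ (x - m)⁻¹ - x⁻¹ := by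
  have hx : 0 < x := hm.trans_lt hmx
  have hxm : 0 < x - m := sub_pos.mpr hmx
  rw [inv_sub_inv hxm.ne' hx.ne', sub_sub_cancel, div_eq_mul_inv, mul_inv, ← mul_assoc]
  gcongr
  exact inv_nonneg.mpr (hx.le.trans hxr)

section

variable {𝒜 : Type*} [CStarAlgebra 𝒜] {a : 𝒜} {m : ℝ}

lemma cfc_sub_const (ha : IsSelfAdjoint a) :
    cfc (fun t : ℝ => t - m) a = a - algebraMap ℝ 𝒜 m := by
  rw [cfc_sub (fun t : ℝ => t) (fun _ => m) a, cfc_id' ℝ a, cfc_const m a]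

lemma cfc_inv_sub_const (ha : IsSelfAdjoint a) (hm : ∀ x ∈ spectrum ℝ a, x ≠ m) :
    cfc (fun t : ℝ => (t - m)⁻¹) a = Ring.inverse (a - algebraMap ℝ 𝒜 m) := by
  rw [cfc_inv (fun t : ℝ => t - m) a (fun x hx => sub_ne_zero.mpr (hm x hx)), cfc_sub_const ha]

variable [PartialOrder 𝒜] [StarOrderedRing 𝒜]

lemma isStrictlyPositive_sub_algebraMap_iff (ha : IsSelfAdjoint a) :
    IsStrictlyPositive (a - algebraMap ℝ 𝒜 m) ↔ ∀ x ∈ spectrum ℝ a, m < x := by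
  simp_rw [← cfc_sub_const ha, cfc_isStrictlyPositive_iff (fun t : ℝ => t - m) a, sub_pos]

lemma algebraMap_le_ringInverse_sub_algebraMap_sub_ringInverse (ha : IsSelfAdjoint a)
    (hm : 0 ≤ m) (hspec : ∀ x ∈ spectrum ℝ a, m < x) :
    algebraMap ℝ 𝒜 (m * (‖a‖ - m)⁻¹ * ‖a‖⁻¹) ≤
      Ring.inverse (a - algebraMap ℝ 𝒜 m) - Ring.inverse a := by
  nontriviality 𝒜
  have hne : ∀ x ∈ spectrum ℝ a, x ≠ m := fun x hx => (hspec x hx).ne'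
  have hne₀ : ∀ x ∈ spectrum ℝ a, x ≠ 0 := fun x hx => (hm.trans_lt (hspec x hx)).ne'
  have hinv : cfc (fun t : ℝ => t⁻¹) a = Ring.inverse a := by
    simpa using cfc_inv_sub_const ha hne₀
  have hcont : ContinuousOn (fun t : ℝ => (t - m)⁻¹) (spectrum ℝ a) :=
    (continuousOn_id.sub continuousOn_const).inv₀ fun x hx => sub_ne_zero.mpr (hne x hx)
  have hcont₀ : ContinuousOn (fun t : ℝ => t⁻¹) (spectrum ℝ a) := continuousOn_id.inv₀ hne₀
  rw [← cfc_inv_sub_const ha hne, ← hinv, ← cfc_sub _ _ a hcont hcont₀]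
  refine algebraMap_le_cfc _ _ a (fun x hx => ?_) (hcont.sub hcont₀)
  exact mul_inv_mul_inv_le_inv_sub_inv hm (hspec x hx)
    ((Real.le_norm_self x).trans (spectrum.norm_le_norm_of_mem hx))

end

theorem inverse_difference_lower_bound_normA_general
    {H : Type*} [NormedAddCommGroup H] [InnerProductSpace ℂ H] [CompleteSpace H]
    (A B : H →L[ℂ] H) (hBpos : 0 ≤ B) (hBinv : IsUnit B)
    (m : ℝ) (hm : 0 < m) (hAB : m • (1 : H →L[ℂ] H) ≤ A - B) :
    (m * (‖A‖ - m)⁻¹ * ‖A‖⁻¹) • (1 : H →L[ℂ] H) ≤ Ring.inverse B - Ring.inverse A := by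
  have hB : IsStrictlyPositive B := hBinv.isStrictlyPositive hBpos
  have hBA : B ≤ A - algebraMap ℝ _ m := by
    rwa [Algebra.algebraMap_eq_smul_one, le_sub_comm]
  have hApos : IsStrictlyPositive (A - algebraMap ℝ _ m) := hB.of_le hBA
  have hA : IsSelfAdjoint A := by
    simpa using hApos.isSelfAdjoint.add (IsSelfAdjoint.algebraMap (H →L[ℂ] H) (.all m))
  rw [← Algebra.algebraMap_eq_smul_one]
  calc _ ≤ Ring.inverse (A - algebraMap ℝ _ m) - Ring.inverse A :=
        algebraMap_le_ringInverse_sub_algebraMap_sub_ringInverse hA hm.le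
          ((isStrictlyPositive_sub_algebraMap_iff hA).mp hApos)
    _ ≤ Ring.inverse B - Ring.inverse A := by gcongr

theorem inverse_difference_lower_bound_normA
    {H : Type*} [NormedAddCommGroup H] [InnerProductSpace ℂ H] [CompleteSpace H] [Nontrivial H]
    (A B : H →L[ℂ] H) (hA : IsSelfAdjoint A) (hB : IsSelfAdjoint B)
    (hApos : 0 ≤ A) (hBpos : 0 ≤ B) (hAinv : IsUnit A) (hBinv : IsUnit B)
    (m : ℝ) (hm : 0 < m) (hAB : m • (1 : H →L[ℂ] H) ≤ A - B) :
    (m * (‖A‖ - m)⁻¹ * ‖A‖⁻¹) • (1 : H →L[ℂ] H) ≤ Ring.inverse B - Ring.inverse A :=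
  inverse_difference_lower_bound_normA_general A B hBpos hBinv m hm hAB
end

section
/- Let A and B be positive invertible bounded operators on a complex Hilbert space such that A − B ≥ m·I for some scalar m > 0. Then B⁻¹ − A⁻¹ ≥ m‖B‖⁻¹(‖B‖ + m)⁻¹ · I. -/
/-!
Put `T = B + m`. Then `m ≤ T ≤ A`, so `A⁻¹ ≤ T⁻¹` because inversion is operator antitone on
strictly positive elements, and `B⁻¹ - T⁻¹ = B⁻¹ (T - B) T⁻¹ = m (T B)⁻¹`. As `T` and `B` commute,
`T B = B² + m B` is positive and bounded above by `‖B‖ (‖B‖ + m)`, which inverts to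
`(T B)⁻¹ ≥ (‖B‖ (‖B‖ + m))⁻¹`.
-/

open Ring

theorem Ring.inverse_algebraMap {𝕜 R : Type*} [Field 𝕜] [Semiring R] [Algebra 𝕜 R] (s : 𝕜) :
    (algebraMap 𝕜 R s)⁻¹ʳ = algebraMap 𝕜 R s⁻¹ := by
  rcases eq_or_ne s 0 with rfl | hs
  · simp
  · have hunit : IsUnit (algebraMap 𝕜 R s) := (IsUnit.mk0 s hs).map (algebraMap 𝕜 R)
    rw [← Ring.inverse_mul_cancel_left _ (algebraMap 𝕜 R s⁻¹) hunit, ← map_mul,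
      mul_inv_cancel₀ hs, map_one, mul_one]

theorem Ring.inverse_sub_inverse_add_algebraMap {𝕜 R : Type*} [CommRing 𝕜] [Ring R] [Algebra 𝕜 R]
    {b : R} (r : 𝕜) (hb : IsUnit b) (hbr : IsUnit (b + algebraMap 𝕜 R r)) :
    b⁻¹ʳ - (b + algebraMap 𝕜 R r)⁻¹ʳ = r • ((b + algebraMap 𝕜 R r) * b)⁻¹ʳ := by
  rw [Ring.inverse_sub_inverse (iff_of_true hb hbr), add_sub_cancel_left,
    Ring.inverse_mul (.inr hb), mul_assoc, ← Algebra.smul_def, mul_smul_comm]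

namespace CStarAlgebra

variable {𝒜 : Type*} [CStarAlgebra 𝒜] [PartialOrder 𝒜] [StarOrderedRing 𝒜]

lemma add_algebraMap_mul_self_le_algebraMap {b : 𝒜} (hb : 0 ≤ b) {r : ℝ} (hr : 0 ≤ r) :
    (b + algebraMap ℝ 𝒜 r) * b ≤ algebraMap ℝ 𝒜 (‖b‖ * (‖b‖ + r)) := by
  have hsq : b * b ≤ algebraMap ℝ 𝒜 (‖b‖ ^ 2) := by
    simpa only [(IsSelfAdjoint.of_nonneg hb).star_eq] using star_mul_le_algebraMap_norm_sq (a := b)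
  have hlin : r • b ≤ r • algebraMap ℝ 𝒜 ‖b‖ :=
    smul_le_smul_of_nonneg_left (IsSelfAdjoint.of_nonneg hb).le_algebraMap_norm_self hr
  calc (b + algebraMap ℝ 𝒜 r) * b = b * b + r • b := by
        rw [add_mul, Algebra.smul_def]
    _ ≤ algebraMap ℝ 𝒜 (‖b‖ ^ 2) + r • algebraMap ℝ 𝒜 ‖b‖ := add_le_add hsq hlin
    _ = algebraMap ℝ 𝒜 (‖b‖ * (‖b‖ + r)) := by
        rw [Algebra.smul_def, ← map_mul, ← map_add]
        ring_nf

lemma algebraMap_le_ringInverse_sub_ringInverse_add_algebraMap {b : 𝒜}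
    (hb : IsStrictlyPositive b) {r : ℝ} (hr : 0 ≤ r) :
    algebraMap ℝ 𝒜 (r * ‖b‖⁻¹ * (‖b‖ + r)⁻¹) ≤ b⁻¹ʳ - (b + algebraMap ℝ 𝒜 r)⁻¹ʳ := by
  set T := b + algebraMap ℝ 𝒜 r
  have hT : IsStrictlyPositive T := hb.add_nonneg (algebraMap_nonneg 𝒜 hr)
  have hTb : IsStrictlyPositive (T * b) :=
    ⟨((Commute.refl b).add_left (Algebra.commutes r b)).mul_nonneg hT.nonneg hb.nonneg,
      hT.isUnit.mul hb.isUnit⟩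
  calc algebraMap ℝ 𝒜 (r * ‖b‖⁻¹ * (‖b‖ + r)⁻¹)
      = r • (algebraMap ℝ 𝒜 (‖b‖ * (‖b‖ + r)))⁻¹ʳ := by
        rw [Ring.inverse_algebraMap, Algebra.smul_def, ← map_mul, mul_inv, mul_assoc]
    _ ≤ r • (T * b)⁻¹ʳ := by
        gcongr
        exact add_algebraMap_mul_self_le_algebraMap hb.nonneg hr
    _ = b⁻¹ʳ - T⁻¹ʳ := (Ring.inverse_sub_inverse_add_algebraMap r hb.isUnit hT.isUnit).symm

end CStarAlgebra

theorem inverse_difference_lower_bound_normB_general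
    {H : Type*} [NormedAddCommGroup H] [InnerProductSpace ℂ H] [CompleteSpace H]
    (A B : H →L[ℂ] H)
    (hBpos : 0 ≤ B) (hBinv : IsUnit B)
    (m : ℝ) (hm : 0 < m) (hAB : m • (1 : H →L[ℂ] H) ≤ A - B) :
    (m * ‖B‖⁻¹ * (‖B‖ + m)⁻¹) • (1 : H →L[ℂ] H) ≤ Ring.inverse B - Ring.inverse A := by
  have hB : IsStrictlyPositive B := hBinv.isStrictlyPositive hBpos
  have hBA : B + algebraMap ℝ (H →L[ℂ] H) m ≤ A := by
    rw [Algebra.algebraMap_eq_smul_one]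
    exact add_le_of_le_sub_left hAB
  rw [← Algebra.algebraMap_eq_smul_one]
  calc _ ≤ B⁻¹ʳ - (B + algebraMap ℝ (H →L[ℂ] H) m)⁻¹ʳ :=
        CStarAlgebra.algebraMap_le_ringInverse_sub_ringInverse_add_algebraMap hB hm.le
    _ ≤ B⁻¹ʳ - A⁻¹ʳ := by
        gcongr
        exact hB.add_nonneg (algebraMap_nonneg _ hm.le)

theorem inverse_difference_lower_bound_normB
    {H : Type*} [NormedAddCommGroup H] [InnerProductSpace ℂ H] [CompleteSpace H] [Nontrivial H]
    (A B : H →L[ℂ] H) (hA : IsSelfAdjoint A) (hB : IsSelfAdjoint B)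
    (hApos : 0 ≤ A) (hBpos : 0 ≤ B) (hAinv : IsUnit A) (hBinv : IsUnit B)
    (m : ℝ) (hm : 0 < m) (hAB : m • (1 : H →L[ℂ] H) ≤ A - B) :
    (m * ‖B‖⁻¹ * (‖B‖ + m)⁻¹) • (1 : H →L[ℂ] H) ≤ Ring.inverse B - Ring.inverse A :=
  inverse_difference_lower_bound_normB_general A B hBpos hBinv m hm hAB
end

section
/- Let A and B be positive invertible bounded self-adjoint operators on a complex Hilbert space with A − B ≥ m·I for some m > 0, and let σ_B = max of the spectrum of B. Then B⁻¹ − A⁻¹ ≥ (σ_B⁻¹ − (σ_B + m)⁻¹) · I. -/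
/-!
Since `B + m ≤ A` and inversion is operator antitone on strictly positive elements,
`A⁻¹ ≤ (B + m)⁻¹`. By the continuous functional calculus, `B⁻¹ - (B + m)⁻¹ = f(B)` with
`f t = t⁻¹ - (t + m)⁻¹ = m / (t (t + m))`, which decreases on `(0, ∞)`. The spectrum of `B` lies
in `(0, ‖B‖]` and contains `‖B‖ = max σ(B)`, so `f(B) ≥ f(‖B‖)`.
-/

open Ring

lemma inv_sub_inv_add_le_of_le {s t m : ℝ} (ht : 0 < t) (hts : t ≤ s) (hm : 0 ≤ m) :
    s⁻¹ - (s + m)⁻¹ ≤ t⁻¹ - (t + m)⁻¹ := by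
  have key : ∀ x : ℝ, 0 < x → x⁻¹ - (x + m)⁻¹ = m / (x * (x + m)) := fun x hx => by
    field_simp
    ring
  rw [key s (ht.trans_le hts), key t ht]
  gcongr
  exact ht.le.trans hts

namespace CStarAlgebra

variable {A : Type*} [CStarAlgebra A] [PartialOrder A] [StarOrderedRing A]

lemma sSup_spectrum_eq_norm_of_nonneg [Nontrivial A] {a : A} (ha : 0 ≤ a) :
    sSup (spectrum ℝ a) = ‖a‖ :=
  IsGreatest.csSup_eq ⟨norm_mem_spectrum_of_nonneg ha,
    fun _ hx => (Real.le_norm_self _).trans (spectrum.norm_le_norm_of_mem hx)⟩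

lemma algebraMap_le_ringInverse_sub_ringInverse_add {a : A} (ha : IsStrictlyPositive a)
    {m : ℝ} (hm : 0 ≤ m) :
    algebraMap ℝ A (‖a‖⁻¹ - (‖a‖ + m)⁻¹) ≤ a⁻¹ʳ - (a + algebraMap ℝ A m)⁻¹ʳ := by
  nontriviality A
  have hpos : ∀ t ∈ spectrum ℝ a, 0 < t := fun _ ht => ha.spectrum_pos ht
  have hshift : ∀ t ∈ spectrum ℝ a, t + m ≠ 0 := fun t ht =>
    (add_pos_of_pos_of_nonneg (hpos t ht) hm).ne'
  have hinv : ContinuousOn (fun t : ℝ => t⁻¹) (spectrum ℝ a) :=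
    continuousOn_id.inv₀ fun t ht => (hpos t ht).ne'
  have hinv_shift : ContinuousOn (fun t : ℝ => (t + m)⁻¹) (spectrum ℝ a) :=
    (continuousOn_id.add continuousOn_const).inv₀ hshift
  have hcfc : cfc (fun t : ℝ => t⁻¹ - (t + m)⁻¹) a = a⁻¹ʳ - (a + algebraMap ℝ A m)⁻¹ʳ := by
    rw [cfc_sub (fun t : ℝ => t⁻¹) (fun t => (t + m)⁻¹) a hinv hinv_shift,
      cfc_ringInverse_id a ha.isUnit, cfc_inv (fun t : ℝ => t + m) a hshift,
      cfc_add_const m (fun t : ℝ => t) a, cfc_id' ℝ a]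
  rw [← hcfc]
  refine algebraMap_le_cfc _ _ a (fun t ht => inv_sub_inv_add_le_of_le (hpos t ht) ?_ hm)
    (hinv.sub hinv_shift)
  exact (Real.le_norm_self t).trans (spectrum.norm_le_norm_of_mem ht)

lemma algebraMap_le_ringInverse_sub_ringInverse {a b : A} (ha : IsStrictlyPositive a) {m : ℝ}
    (hm : 0 ≤ m) (hab : a + algebraMap ℝ A m ≤ b) :
    algebraMap ℝ A (‖a‖⁻¹ - (‖a‖ + m)⁻¹) ≤ a⁻¹ʳ - b⁻¹ʳ :=
  (algebraMap_le_ringInverse_sub_ringInverse_add ha hm).trans <|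
    sub_le_sub_left (ringInverse_le_ringInverse hab (ha.add_nonneg (algebraMap_nonneg A hm))) _

end CStarAlgebra

theorem inverse_difference_lower_bound_spectral_general
    {H : Type*} [NormedAddCommGroup H] [InnerProductSpace ℂ H] [CompleteSpace H] [Nontrivial H]
    (A B : H →L[ℂ] H)
    (hBpos : 0 ≤ B) (hBinv : IsUnit B)
    (m : ℝ) (hm : 0 < m) (hAB : m • (1 : H →L[ℂ] H) ≤ A - B) :
    ((sSup (spectrum ℝ B))⁻¹ - (sSup (spectrum ℝ B) + m)⁻¹) • (1 : H →L[ℂ] H) ≤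
      Ring.inverse B - Ring.inverse A := by
  rw [CStarAlgebra.sSup_spectrum_eq_norm_of_nonneg hBpos, ← Algebra.algebraMap_eq_smul_one]
  refine CStarAlgebra.algebraMap_le_ringInverse_sub_ringInverse (hBinv.isStrictlyPositive hBpos)
    hm.le ?_
  rw [Algebra.algebraMap_eq_smul_one]
  exact le_sub_iff_add_le'.mp hAB

theorem inverse_difference_lower_bound_spectral
    {H : Type*} [NormedAddCommGroup H] [InnerProductSpace ℂ H] [CompleteSpace H] [Nontrivial H]
    (A B : H →L[ℂ] H) (hA : IsSelfAdjoint A) (hB : IsSelfAdjoint B)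
    (hApos : 0 ≤ A) (hBpos : 0 ≤ B) (hAinv : IsUnit A) (hBinv : IsUnit B)
    (m : ℝ) (hm : 0 < m) (hAB : m • (1 : H →L[ℂ] H) ≤ A - B) :
    ((sSup (spectrum ℝ B))⁻¹ - (sSup (spectrum ℝ B) + m)⁻¹) • (1 : H →L[ℂ] H) ≤
      Ring.inverse B - Ring.inverse A :=
  inverse_difference_lower_bound_spectral_general A B hBpos hBinv m hm hAB
end

section
/- Let A, B be self-adjoint bounded operators on a complex Hilbert space with spectra contained in (a, ∞) for some real a, and suppose A − B ≥ m·I for some m > 0. Then for every λ ≤ a, (B − λ·I)⁻¹ − (A − λ·I)⁻¹ ≥ m‖B − λ·I‖⁻¹(‖B − λ·I‖ + m)⁻¹ · I > 0. -/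
/-!
With `B' = B - λ` and `A' = A - λ`, the operator `B'` is strictly positive and `B' + m ≤ A'`.
Inversion is operator antitone on strictly positive elements, so `A'⁻¹ ≤ (B' + m)⁻¹`, and by the
continuous functional calculus `B'⁻¹ - (B' + m)⁻¹ = f(B')` with `f x = m / (x (x + m))`, which is at
least `m / (‖B'‖ (‖B'‖ + m))` on `σ(B') ⊆ (0, ‖B'‖]`.
-/

open Ring

lemma div_mul_add_le_inv_sub_inv_add {x r m : ℝ} (hx : 0 < x) (hxr : x ≤ r) (hm : 0 ≤ m) :
    m / (r * (r + m)) ≤ x⁻¹ - (x + m)⁻¹ := by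
  have hxm : 0 < x + m := by linarith
  rw [inv_sub_inv hx.ne' hxm.ne', add_sub_cancel_left]
  gcongr
  linarith

section CStarAlgebra

variable {𝒜 : Type*} [CStarAlgebra 𝒜] [PartialOrder 𝒜] [StarOrderedRing 𝒜]

lemma IsSelfAdjoint.isStrictlyPositive_sub_algebraMap {b : 𝒜} (hb : IsSelfAdjoint b) {lam : ℝ}
    (h : ∀ x ∈ spectrum ℝ b, lam < x) : IsStrictlyPositive (b - algebraMap ℝ 𝒜 lam) := by
  rw [StarOrderedRing.isStrictlyPositive_iff_spectrum_pos (R := ℝ) _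
    (hb.sub (.algebraMap 𝒜 (.all lam))), ← spectrum.sub_singleton_eq]
  rintro _ ⟨x, hx, _, rfl, rfl⟩
  exact sub_pos.mpr (h x hx)

lemma IsStrictlyPositive.ringInverse_sub_ringInverse_add_algebraMap {b : 𝒜}
    (hb : IsStrictlyPositive b) {m : ℝ} (hm : 0 ≤ m) :
    b⁻¹ʳ - (b + algebraMap ℝ 𝒜 m)⁻¹ʳ = cfc (fun x : ℝ ↦ x⁻¹ - (x + m)⁻¹) b := by
  have hpos : ∀ x ∈ spectrum ℝ b, 0 < x := fun x hx ↦ hb.spectrum_pos hx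
  have hshift_ne : ∀ x ∈ spectrum ℝ b, x + m ≠ 0 := fun x hx ↦ by linarith [hpos x hx]
  rw [cfc_sub (fun x : ℝ ↦ x⁻¹) (fun x : ℝ ↦ (x + m)⁻¹) b
      (continuousOn_id.inv₀ fun x hx ↦ (hpos x hx).ne')
      ((continuousOn_id.add continuousOn_const).inv₀ hshift_ne),
    cfc_ringInverse_id (R := ℝ) b hb.isUnit, cfc_inv (fun x : ℝ ↦ x + m) b hshift_ne,
    cfc_add_const m (fun x : ℝ ↦ x) b, cfc_id' ℝ b]

lemma IsStrictlyPositive.algebraMap_le_ringInverse_sub_ringInverse_add_algebraMap {b : 𝒜}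
    (hb : IsStrictlyPositive b) {m : ℝ} (hm : 0 ≤ m) :
    algebraMap ℝ 𝒜 (m / (‖b‖ * (‖b‖ + m))) ≤ b⁻¹ʳ - (b + algebraMap ℝ 𝒜 m)⁻¹ʳ := by
  nontriviality 𝒜
  have hpos : ∀ x ∈ spectrum ℝ b, 0 < x := fun x hx ↦ hb.spectrum_pos hx
  have hshift_ne : ∀ x ∈ spectrum ℝ b, x + m ≠ 0 := fun x hx ↦ by linarith [hpos x hx]
  rw [hb.ringInverse_sub_ringInverse_add_algebraMap hm]
  exact algebraMap_le_cfc _ _ b (fun x hx ↦ div_mul_add_le_inv_sub_inv_add (hpos x hx)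
    ((Real.le_norm_self x).trans (spectrum.norm_le_norm_of_mem hx)) hm)
    ((continuousOn_id.inv₀ fun x hx ↦ (hpos x hx).ne').sub
      ((continuousOn_id.add continuousOn_const).inv₀ hshift_ne))

lemma IsStrictlyPositive.algebraMap_le_ringInverse_sub_ringInverse {b c : 𝒜}
    (hb : IsStrictlyPositive b) {m : ℝ} (hm : 0 ≤ m) (hbc : b + algebraMap ℝ 𝒜 m ≤ c) :
    algebraMap ℝ 𝒜 (m / (‖b‖ * (‖b‖ + m))) ≤ b⁻¹ʳ - c⁻¹ʳ :=
  (hb.algebraMap_le_ringInverse_sub_ringInverse_add_algebraMap hm).trans <|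
    sub_le_sub_left (CStarAlgebra.ringInverse_le_ringInverse hbc
      (hb.add_nonneg (algebraMap_nonneg 𝒜 hm))) _

end CStarAlgebra

theorem resolvent_difference_lower_bound_general
    {H : Type*} [NormedAddCommGroup H] [InnerProductSpace ℂ H] [CompleteSpace H] [Nontrivial H]
    (a : ℝ) (A B : H →L[ℂ] H) (hB : IsSelfAdjoint B)
    (hBsp : spectrum ℝ B ⊆ Set.Ioi a)
    (m : ℝ) (hm : 0 < m) (hAB : m • (1 : H →L[ℂ] H) ≤ A - B) :
    ∀ lam : ℝ, lam ≤ a →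
      (m * ‖B - lam • (1 : H →L[ℂ] H)‖⁻¹ * (‖B - lam • (1 : H →L[ℂ] H)‖ + m)⁻¹) •
          (1 : H →L[ℂ] H) ≤
        Ring.inverse (B - lam • (1 : H →L[ℂ] H)) - Ring.inverse (A - lam • (1 : H →L[ℂ] H)) ∧
      0 < m * ‖B - lam • (1 : H →L[ℂ] H)‖⁻¹ * (‖B - lam • (1 : H →L[ℂ] H)‖ + m)⁻¹ := by
  intro lam hlam
  simp only [← Algebra.algebraMap_eq_smul_one] at hAB ⊢
  rw [mul_assoc, ← mul_inv, ← div_eq_mul_inv]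
  have hpos : IsStrictlyPositive (B - algebraMap ℝ _ lam) :=
    hB.isStrictlyPositive_sub_algebraMap fun x hx ↦ hlam.trans_lt (hBsp hx)
  have hshift : B - algebraMap ℝ _ lam + algebraMap ℝ _ m ≤ A - algebraMap ℝ _ lam := by
    rwa [sub_add_eq_add_sub, sub_le_sub_iff_right, ← le_sub_iff_add_le']
  have hnorm : 0 < ‖B - algebraMap ℝ (H →L[ℂ] H) lam‖ := norm_pos_iff.mpr hpos.isUnit.ne_zero
  exact ⟨hpos.algebraMap_le_ringInverse_sub_ringInverse hm.le hshift, by positivity⟩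

theorem resolvent_difference_lower_bound
    {H : Type*} [NormedAddCommGroup H] [InnerProductSpace ℂ H] [CompleteSpace H] [Nontrivial H]
    (a : ℝ) (A B : H →L[ℂ] H) (hA : IsSelfAdjoint A) (hB : IsSelfAdjoint B)
    (hAsp : spectrum ℝ A ⊆ Set.Ioi a) (hBsp : spectrum ℝ B ⊆ Set.Ioi a)
    (m : ℝ) (hm : 0 < m) (hAB : m • (1 : H →L[ℂ] H) ≤ A - B) :
    ∀ lam : ℝ, lam ≤ a →
      (m * ‖B - lam • (1 : H →L[ℂ] H)‖⁻¹ * (‖B - lam • (1 : H →L[ℂ] H)‖ + m)⁻¹) •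
          (1 : H →L[ℂ] H) ≤
        Ring.inverse (B - lam • (1 : H →L[ℂ] H)) - Ring.inverse (A - lam • (1 : H →L[ℂ] H)) ∧
      0 < m * ‖B - lam • (1 : H →L[ℂ] H)‖⁻¹ * (‖B - lam • (1 : H →L[ℂ] H)‖ + m)⁻¹ :=
  resolvent_difference_lower_bound_general a A B hB hBsp m hm hAB
end

section
/- Let λ ≤ a be real numbers and let A, B be self-adjoint bounded operators on a complex Hilbert space with spectra in (a, ∞). If A > B (i.e., A − B is positive and invertible), then (B − λ·I)⁻¹ > (A − λ·I)⁻¹, i.e., (B − λ·I)⁻¹ − (A − λ·I)⁻¹ is positive and invertible. -/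
theorem resolvent_strictly_decreasing
    {H : Type*} [NormedAddCommGroup H] [InnerProductSpace ℂ H] [CompleteSpace H]
    (a lam : ℝ) (hlam : lam ≤ a)
    (A B : H →L[ℂ] H) (hA : IsSelfAdjoint A) (hB : IsSelfAdjoint B)
    (hAsp : spectrum ℝ A ⊆ Set.Ioi a) (hBsp : spectrum ℝ B ⊆ Set.Ioi a)
    (hABpos : 0 ≤ A - B) (hABinv : IsUnit (A - B)) :
    0 ≤ Ring.inverse (B - lam • (1 : H →L[ℂ] H)) - Ring.inverse (A - lam • (1 : H →L[ℂ] H)) ∧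
    IsUnit (Ring.inverse (B - lam • (1 : H →L[ℂ] H)) -
      Ring.inverse (A - lam • (1 : H →L[ℂ] H))) := by
  have h1 : lam • (1 : H →L[ℂ] H) = algebraMap ℝ (H →L[ℂ] H) lam :=
    (Algebra.algebraMap_eq_smul_one lam).symm
  -- spectra of the shifted operators are positive
  have spec_shift : ∀ (T : H →L[ℂ] H), spectrum ℝ T ⊆ Set.Ioi a →
      spectrum ℝ (T - lam • (1 : H →L[ℂ] H)) ⊆ Set.Ioi 0 := by
    intro T hT
    rw [h1, ← spectrum.sub_singleton_eq]
    rintro x hx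
    rw [Set.mem_sub] at hx
    obtain ⟨μ, hμ, r, hr, rfl⟩ := hx
    rcases Set.mem_singleton_iff.mp hr with rfl
    have := hT hμ
    simp only [Set.mem_Ioi] at this ⊢
    linarith
  have hA'sp := spec_shift A hAsp
  have hB'sp := spec_shift B hBsp
  have hA' : IsSelfAdjoint (A - lam • (1 : H →L[ℂ] H)) := by
    rw [h1]; exact hA.sub (IsSelfAdjoint.algebraMap _ (star_trivial lam))
  have hB' : IsSelfAdjoint (B - lam • (1 : H →L[ℂ] H)) := by
    rw [h1]; exact hB.sub (IsSelfAdjoint.algebraMap _ (star_trivial lam))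
  -- nonnegativity and invertibility of shifted operators
  have hA'nonneg : 0 ≤ A - lam • (1 : H →L[ℂ] H) :=
    (StarOrderedRing.nonneg_iff_spectrum_nonneg (R := ℝ) _ hA').mpr
      fun x hx => le_of_lt (hA'sp hx)
  have hB'nonneg : 0 ≤ B - lam • (1 : H →L[ℂ] H) :=
    (StarOrderedRing.nonneg_iff_spectrum_nonneg (R := ℝ) _ hB').mpr
      fun x hx => le_of_lt (hB'sp hx)
  have hA'unit : IsUnit (A - lam • (1 : H →L[ℂ] H)) :=
    (spectrum.zero_notMem_iff ℝ).mp fun h => lt_irrefl 0 (Set.mem_Ioi.mp (hA'sp h))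
  have hB'unit : IsUnit (B - lam • (1 : H →L[ℂ] H)) :=
    (spectrum.zero_notMem_iff ℝ).mp fun h => lt_irrefl 0 (Set.mem_Ioi.mp (hB'sp h))
  obtain ⟨uA, huA⟩ := hA'unit
  obtain ⟨uB, huB⟩ := hB'unit
  have hle : (uB : H →L[ℂ] H) ≤ uA := by
    rw [huA, huB]
    rw [← sub_nonneg]
    have : A - lam • (1 : H →L[ℂ] H) - (B - lam • (1 : H →L[ℂ] H)) = A - B := by abel
    rw [this]; exact hABpos
  have hABeq : A - B = (uA : H →L[ℂ] H) - uB := by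
    rw [huA, huB]; abel
  rw [← huA, ← huB, Ring.inverse_unit, Ring.inverse_unit]
  constructor
  · rw [sub_nonneg]
    exact CStarAlgebra.inv_le_inv (by rw [huB]; exact hB'nonneg) hle
  · have key : (↑uB⁻¹ : H →L[ℂ] H) - ↑uA⁻¹ = ↑uB⁻¹ * (A - B) * ↑uA⁻¹ := by
      rw [hABeq, mul_sub, sub_mul, mul_assoc, mul_assoc]
      simp
    rw [key]
    exact ((uB⁻¹.isUnit.mul hABinv).mul uA⁻¹.isUnit)
end
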